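/- Let sys : {(g,n) : 2g−2+n > 0} → ℝ satisfy: (i) sys(g,0) ≥ U·ln g for g ≥ 2; (ii) sys(g,n) ≥ min{U·ln g, 2·arccosh(2(g−1)/n + 1)} for g ≥ 2, n ≥ 1; (iii) sys(g,n) ≤ 4·arccosh((6g−6+3n)/n) for n ≥ 2. Then for any function n : ℕ → ℕ with n(g) ≥ 2 and g/n(g) → ∞, there exist constants 0 < c ≤ C and g₀ such that c·ln(g/n(g)) ≤ sys(g, n(g)) ≤ C·ln(g/n(g)) for all g ≥ g₀. -/

import Mathlib

open Filter

noncomputable def arcosh (x : ℝ) : ℝ := Real.log (x + Real.sqrt (x ^ 2 - 1))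

/-! With `x = g / n(g)`, both bounds reduce to `log y ≤ arcosh y ≤ log (2 y)` for `y ≥ 1`.
The argument of the arcosh in (ii) is at least `x`, and `log x ≤ log g`, so (ii) gives
`sys ≥ min U 2 * log x`. The argument `y` in (iii) is at most `6 x + 3`, and `2 (6 x + 3) ≤ x²`
once `x ≥ 13`, so (iii) gives `sys ≤ 4 log (x²) = 8 log x`. -/

open Real hiding arcosh

lemma log_le_arcosh {y : ℝ} (hy : 1 ≤ y) : log y ≤ arcosh y :=
  log_le_log (by linarith) (le_add_of_nonneg_right (sqrt_nonneg _))

lemma arcosh_le_log_two_mul {y : ℝ} (hy : 1 ≤ y) : arcosh y ≤ log (2 * y) := by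
  have hsqrt : sqrt (y ^ 2 - 1) ≤ y := by
    rw [sqrt_le_left (by linarith)]
    linarith
  exact log_le_log (by positivity) (by linarith)

lemma log_div_le_arcosh {g m : ℝ} (hg : 1 ≤ g) (hm : 0 < m) (hgm : 2 ≤ g + m) :
    log (g / m) ≤ arcosh (2 * (g - 1) / m + 1) := by
  have hle : g / m ≤ 2 * (g - 1) / m + 1 := by
    rw [div_add_one hm.ne', div_le_div_iff_of_pos_right hm]
    linarith
  have hone : 1 ≤ 2 * (g - 1) / m + 1 := by
    have : 0 ≤ 2 * (g - 1) / m := div_nonneg (by linarith) hm.le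
    linarith
  exact (log_le_log (by positivity) hle).trans (log_le_arcosh hone)

lemma arcosh_le_two_mul_log_div {g m : ℝ} (hg : 1 ≤ g) (hm : 0 < m) (hgm : 13 ≤ g / m) :
    arcosh ((6 * g - 6 + 3 * m) / m) ≤ 2 * log (g / m) := by
  set y := (6 * g - 6 + 3 * m) / m
  have hy_le : y ≤ 6 * (g / m) + 3 := by
    rw [mul_div_assoc', div_add' _ _ _ hm.ne', div_le_div_iff_of_pos_right hm]
    linarith
  have hy_ge : 1 ≤ y := by
    rw [one_le_div hm]
    linarith
  calc arcosh y ≤ log (2 * y) := arcosh_le_log_two_mul hy_ge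
    _ ≤ log ((g / m) ^ 2) := log_le_log (by positivity) (by nlinarith)
    _ = 2 * log (g / m) := by rw [log_pow]; norm_num

theorem sys_two_sided_log_bound_general (U : ℝ) (hU : 0 < U) (sys : ℕ → ℕ → ℝ)
    (h2 : ∀ g m : ℕ, 2 ≤ g → 1 ≤ m →
      min (U * Real.log (g : ℝ)) (2 * arcosh (2 * ((g : ℝ) - 1) / (m : ℝ) + 1)) ≤ sys g m)
    (h3 : ∀ g m : ℕ, 2 ≤ m →
      sys g m ≤ 4 * arcosh ((6 * (g : ℝ) - 6 + 3 * (m : ℝ)) / (m : ℝ)))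
    (n : ℕ → ℕ) (hn : ∀ g, 2 ≤ n g)
    (hlim : Tendsto (fun g : ℕ => (g : ℝ) / (n g : ℝ)) atTop atTop) :
    ∃ c C : ℝ, 0 < c ∧ c ≤ C ∧ ∃ g₀ : ℕ, ∀ g ≥ g₀,
      c * Real.log ((g : ℝ) / (n g : ℝ)) ≤ sys g (n g) ∧
      sys g (n g) ≤ C * Real.log ((g : ℝ) / (n g : ℝ)) := by
  refine ⟨min U 2, 8, lt_min hU two_pos, (min_le_right _ _).trans (by norm_num), ?_⟩
  obtain ⟨g₀, hg₀⟩ := eventually_atTop.mp (hlim.eventually_ge_atTop 13)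
  refine ⟨g₀, fun g hg => ?_⟩
  have hx : (13 : ℝ) ≤ g / n g := hg₀ g hg
  have hm : (2 : ℝ) ≤ n g := mod_cast hn g
  have hg26 : (26 : ℝ) ≤ g := by nlinarith [(le_div_iff₀ (by linarith : (0 : ℝ) < n g)).mp hx]
  have hlog : 0 ≤ log ((g : ℝ) / n g) := log_nonneg (by linarith)
  constructor
  · refine le_trans (le_min ?_ ?_) (h2 g (n g) (by exact_mod_cast (by linarith : (2 : ℝ) ≤ g))
      (by linarith [hn g]))
    · exact mul_le_mul (min_le_left _ _)
        (log_le_log (by linarith) (div_le_self (by linarith) (by linarith))) hlog hU.le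
    · exact mul_le_mul (min_le_right _ _)
        (log_div_le_arcosh (by linarith) (by linarith) (by linarith)) hlog zero_le_two
  · calc sys g (n g) ≤ 4 * arcosh ((6 * (g : ℝ) - 6 + 3 * n g) / n g) := h3 g (n g) (hn g)
      _ ≤ 4 * (2 * log ((g : ℝ) / n g)) := by
        gcongr
        exact arcosh_le_two_mul_log_div (by linarith) (by linarith) hx
      _ = 8 * log ((g : ℝ) / n g) := by ring

theorem sys_two_sided_log_bound (U : ℝ) (hU : 0 < U) (sys : ℕ → ℕ → ℝ)
    (h1 : ∀ g : ℕ, 2 ≤ g → U * Real.log (g : ℝ) ≤ sys g 0)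
    (h2 : ∀ g m : ℕ, 2 ≤ g → 1 ≤ m →
      min (U * Real.log (g : ℝ)) (2 * arcosh (2 * ((g : ℝ) - 1) / (m : ℝ) + 1)) ≤ sys g m)
    (h3 : ∀ g m : ℕ, 2 ≤ m →
      sys g m ≤ 4 * arcosh ((6 * (g : ℝ) - 6 + 3 * (m : ℝ)) / (m : ℝ)))
    (n : ℕ → ℕ) (hn : ∀ g, 2 ≤ n g)
    (hlim : Tendsto (fun g : ℕ => (g : ℝ) / (n g : ℝ)) atTop atTop) :
    ∃ c C : ℝ, 0 < c ∧ c ≤ C ∧ ∃ g₀ : ℕ, ∀ g ≥ g₀,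
      c * Real.log ((g : ℝ) / (n g : ℝ)) ≤ sys g (n g) ∧
      sys g (n g) ≤ C * Real.log ((g : ℝ) / (n g : ℝ)) :=
  sys_two_sided_log_bound_general U hU sys h2 h3 n hn hlim
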